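/- arXiv:2205.00527 — 2 statements merged into one kernel-verified Lean document; each statement's English description precedes it below -/
import Mathlib

section
/- For every nonnegative integer n, the signed count ∑_π (−1)^{E(π)}, taken over all partitions π with O(π) = n (a finite set, since all parts are ≤ n and there are at most 2n + 1 parts), equals the number of partitions of n into even parts. -/
/-- Sum of `f` over the entries of a list at even 0-based positions, i.e. over the
odd-indexed parts `λ1, λ3, λ5, …` of a partition `(λ1, λ2, λ3, …)`. -/
def sumAlt (f : ℕ → ℕ) : List ℕ → ℕ
  | [] => 0
  | [a] => f a
  | a :: _ :: l => f a + sumAlt f l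

/-- `O(π) = λ1 + λ3 + λ5 + ⋯`, the sum of the odd-indexed parts. -/
def Osum (l : List ℕ) : ℕ := sumAlt id l

/-- `E(π) = λ2 + λ4 + λ6 + ⋯`, the sum of the even-indexed parts. -/
def Esum (l : List ℕ) : ℕ := sumAlt id l.tail

/-- `γ(π) = λ1 − λ2 + λ3 − λ4 + ⋯ = O(π) − E(π)`, the alternating sum of the parts.
For a weakly decreasing list we have `Osum l ≥ Esum l`, so natural subtraction is exact. -/
def gammaSum (l : List ℕ) : ℕ := Osum l - Esum l

/-- `⌈O⌉(π) = ∑ ⌈λ_{2i−1}/2⌉`. -/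
def ceilO (l : List ℕ) : ℕ := sumAlt (fun a => (a + 1) / 2) l

/-- `⌊O⌋(π) = ∑ ⌊λ_{2i−1}/2⌋`. -/
def floorO (l : List ℕ) : ℕ := sumAlt (fun a => a / 2) l

/-- `⌈E⌉(π) = ∑ ⌈λ_{2i}/2⌉`. -/
def ceilE (l : List ℕ) : ℕ := sumAlt (fun a => (a + 1) / 2) l.tail

/-- `⌊E⌋(π) = ∑ ⌊λ_{2i}/2⌋`. -/
def floorE (l : List ℕ) : ℕ := sumAlt (fun a => a / 2) l.tail

/-- A partition: a weakly decreasing finite list of positive integers. -/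
def IsPartition (l : List ℕ) : Prop := l.Pairwise (· ≥ ·) ∧ ∀ x ∈ l, 0 < x

/-- A partition into distinct parts: a strictly decreasing finite list of positive integers. -/
def IsDistinctPartition (l : List ℕ) : Prop := l.Pairwise (· > ·) ∧ ∀ x ∈ l, 0 < x

/-- The Gaussian binomial coefficient `[n choose k]_q` as a polynomial in `q`
(defined by the q-Pascal recurrence; it equals `(q;q)_n / ((q;q)_k (q;q)_{n−k})`). -/
noncomputable def qbinom : ℕ → ℕ → Polynomial ℤ
  | _, 0 => 1
  | 0, _ + 1 => 0
  | n + 1, k + 1 => qbinom n k + Polynomial.X ^ (k + 1) * qbinom n (k + 1)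

/-!
Weight a partition `π` by `x ^ O(π) * y ^ E(π)`. Removing the first part swaps odd- and
even-indexed parts, so the weighted sum `W_L(M; x, y)` (`oddEvenSum M L x y`) over partitions
with parts `≤ M` and at most `L` parts satisfies
`W_{L+1}(M; x, y) = 1 + ∑_{1 ≤ a ≤ M} x ^ a W_L(a; y, x)`.
Taking two steps at `y = -1` produces the inner alternating sum
`∑_{0 ≤ b ≤ a} (-1) ^ b W_{2K}(b; x, -1)`. By induction `W_{2K}(b; x, -1)` is the generating
function of partitions into at most `K` even parts `≤ b` (`evenPartsSum b K x`), which takes the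
same value at `b = 2j` and `b = 2j + 1`; hence the alternating sum is that generating function
at `a` when `a` is even and `0` when `a` is odd, which is the recursion for partitions into even
parts.
-/

open Finset Polynomial

lemma Osum_cons (a : ℕ) (l : List ℕ) : Osum (a :: l) = a + Esum l := by
  cases l <;> rfl

lemma Esum_cons (a : ℕ) (l : List ℕ) : Esum (a :: l) = Osum l := rfl

lemma isPartition_cons {a : ℕ} {l : List ℕ} :
    IsPartition (a :: l) ↔ 0 < a ∧ (∀ x ∈ l, x ≤ a) ∧ IsPartition l := by
  simp only [IsPartition, List.pairwise_cons, List.mem_cons, forall_eq_or_imp, ge_iff_le]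
  tauto

lemma length_le_two_mul_Osum {l : List ℕ} (hl : ∀ x ∈ l, 0 < x) : l.length ≤ 2 * Osum l := by
  suffices l.length ≤ 2 * Osum l ∧ l.length ≤ 2 * Esum l + 1 from this.1
  induction l with
  | nil => simp [Osum, Esum, sumAlt]
  | cons a l ih =>
    obtain ⟨ihO, ihE⟩ := ih fun x hx => hl x (List.mem_cons_of_mem a hx)
    have ha := hl a List.mem_cons_self
    rw [Osum_cons, Esum_cons, List.length_cons]
    omega

lemma le_Osum_of_mem {l : List ℕ} (hl : IsPartition l) {x : ℕ} (hx : x ∈ l) : x ≤ Osum l := by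
  cases l with
  | nil => simp at hx
  | cons a l =>
    rw [Osum_cons]
    rcases List.mem_cons.mp hx with rfl | hx
    · omega
    · have := (isPartition_cons.mp hl).2.1 x hx
      omega

def boundedPartitions : ℕ → ℕ → Finset (List ℕ)
  | _, 0 => {[]}
  | M, L + 1 => insert [] ((Icc 1 M).biUnion fun a =>
      (boundedPartitions a L).map ⟨List.cons a, List.cons_injective⟩)

lemma mem_boundedPartitions {M L : ℕ} {l : List ℕ} :
    l ∈ boundedPartitions M L ↔ IsPartition l ∧ (∀ x ∈ l, x ≤ M) ∧ l.length ≤ L := by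
  induction L generalizing M l with
  | zero =>
    simp only [boundedPartitions, mem_singleton, Nat.le_zero, List.length_eq_zero_iff]
    constructor
    · rintro rfl
      simp [IsPartition]
    · exact fun h => h.2.2
  | succ L ih =>
    cases l with
    | nil => simp [boundedPartitions, IsPartition]
    | cons a l =>
      simp only [boundedPartitions, mem_insert, reduceCtorEq, false_or, mem_biUnion, mem_Icc,
        mem_map, Function.Embedding.coeFn_mk, List.cons.injEq, isPartition_cons, ih,
        List.mem_cons, forall_eq_or_imp, List.length_cons]
      constructor
      · rintro ⟨a, ⟨ha1, haM⟩, l, ⟨hl, hla, hlen⟩, rfl, rfl⟩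
        exact ⟨⟨ha1, hla, hl⟩, ⟨haM, fun x hx => (hla x hx).trans haM⟩, by omega⟩
      · rintro ⟨⟨ha, hla, hl⟩, ⟨haM, -⟩, hlen⟩
        exact ⟨a, ⟨ha, haM⟩, l, ⟨hl, hla, by omega⟩, rfl, rfl⟩

lemma sum_boundedPartitions_zero {R : Type*} [AddCommMonoid R] (M : ℕ) (f : List ℕ → R) :
    ∑ l ∈ boundedPartitions M 0, f l = f [] := by
  simp [boundedPartitions]

lemma sum_boundedPartitions_succ {R : Type*} [AddCommMonoid R] (M L : ℕ) (f : List ℕ → R) :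
    ∑ l ∈ boundedPartitions M (L + 1), f l
      = f [] + ∑ a ∈ Icc 1 M, ∑ l ∈ boundedPartitions a L, f (a :: l) := by
  rw [boundedPartitions, sum_insert (by simp), sum_biUnion]
  · simp
  · intro a _ b _ hab
    simp only [Function.onFun, disjoint_left, mem_map, Function.Embedding.coeFn_mk]
    rintro _ ⟨l, -, rfl⟩ ⟨l', -, h⟩
    exact hab (List.cons.inj h).1.symm

section GeneratingSums

variable {R : Type*} [CommSemiring R]

def oddEvenSum (M L : ℕ) (x y : R) : R :=
  ∑ l ∈ boundedPartitions M L, x ^ Osum l * y ^ Esum l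

def evenPartsSum (M K : ℕ) (x : R) : R :=
  ∑ l ∈ boundedPartitions M K, if ∀ p ∈ l, Even p then x ^ l.sum else 0

lemma oddEvenSum_zero (M : ℕ) (x y : R) : oddEvenSum M 0 x y = 1 := by
  simp [oddEvenSum, sum_boundedPartitions_zero, Osum, Esum, sumAlt]

lemma oddEvenSum_succ (M L : ℕ) (x y : R) :
    oddEvenSum M (L + 1) x y = 1 + ∑ a ∈ Icc 1 M, x ^ a * oddEvenSum a L y x := by
  simp only [oddEvenSum, sum_boundedPartitions_succ, Osum_cons, Esum_cons, mul_sum]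
  congr 1
  · simp [Osum, Esum, sumAlt]
  · refine sum_congr rfl fun a _ => sum_congr rfl fun l _ => ?_
    ring

lemma evenPartsSum_zero (M : ℕ) (x : R) : evenPartsSum M 0 x = 1 := by
  simp [evenPartsSum, sum_boundedPartitions_zero]

lemma evenPartsSum_succ (M K : ℕ) (x : R) :
    evenPartsSum M (K + 1) x
      = 1 + ∑ a ∈ Icc 1 M, if Even a then x ^ a * evenPartsSum a K x else 0 := by
  simp only [evenPartsSum, sum_boundedPartitions_succ, List.mem_cons, forall_eq_or_imp,
    List.sum_cons, pow_add]
  congr 1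
  · simp
  · refine sum_congr rfl fun a _ => ?_
    split_ifs with ha <;> simp [mul_sum, ha]

lemma evenPartsSum_zero_left (K : ℕ) (x : R) : evenPartsSum 0 K x = 1 := by
  cases K <;> simp [evenPartsSum_zero, evenPartsSum_succ]

lemma evenPartsSum_two_mul_add_one (j K : ℕ) (x : R) :
    evenPartsSum (2 * j + 1) K x = evenPartsSum (2 * j) K x := by
  cases K with
  | zero => simp [evenPartsSum_zero]
  | succ K => simp [evenPartsSum_succ, sum_Icc_succ_top]

end GeneratingSums

lemma sum_Icc_neg_one_pow_mul_of_pairs {R : Type*} [CommRing R] {g : ℕ → R}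
    (hg : ∀ j, g (2 * j + 1) = g (2 * j)) (a : ℕ) :
    g 0 + ∑ b ∈ Icc 1 a, (-1) ^ b * g b = if Even a then g a else 0 := by
  induction a with
  | zero => simp
  | succ a ih =>
    rw [sum_Icc_succ_top (by omega), ← add_assoc, ih]
    rcases Nat.even_or_odd' a with ⟨j, rfl | rfl⟩
    · simp [hg, pow_succ]
    · simp [pow_succ, Nat.even_add_one]

lemma oddEvenSum_two_mul_neg_one {R : Type*} [CommRing R] (M K : ℕ) (x : R) :
    oddEvenSum M (2 * K) x (-1) = evenPartsSum M K x := by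
  induction K generalizing M with
  | zero => simp [oddEvenSum_zero, evenPartsSum_zero]
  | succ K ih =>
    have inner (a : ℕ) : oddEvenSum a (2 * K + 1) (-1) x
        = if Even a then evenPartsSum a K x else 0 := by
      rw [oddEvenSum_succ, ← sum_Icc_neg_one_pow_mul_of_pairs (g := fun b => evenPartsSum b K x)
        (fun j => evenPartsSum_two_mul_add_one j K x), evenPartsSum_zero_left]
      simp [ih]
    rw [mul_add_one, oddEvenSum_succ, evenPartsSum_succ]
    simp [inner, mul_ite]

lemma coeff_oddEvenSum (M L n : ℕ) :
    (oddEvenSum M L (X : ℤ[X]) (-1)).coeff n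
      = ∑ l ∈ boundedPartitions M L with Osum l = n, (-1) ^ Esum l := by
  rw [oddEvenSum, finsetSum_coeff, sum_filter]
  refine sum_congr rfl fun l _ => ?_
  rw [show (-1 : ℤ[X]) ^ Esum l = C ((-1) ^ Esum l) by simp, mul_comm, coeff_C_mul_X_pow]
  exact if_congr eq_comm rfl rfl

lemma coeff_evenPartsSum (M K n : ℕ) :
    (evenPartsSum M K (X : ℤ[X])).coeff n
      = #{l ∈ boundedPartitions M K | (∀ p ∈ l, Even p) ∧ l.sum = n} := by
  rw [evenPartsSum, finsetSum_coeff, card_filter, Nat.cast_sum]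
  refine sum_congr rfl fun l _ => ?_
  split_ifs <;> simp_all [coeff_X_pow, eq_comm]

/-- The signed count `∑ (−1)^{E(π)}` over partitions with `O(π) = n` equals the number of
partitions of `n` into even parts. -/
theorem signed_partition_even_count (n : ℕ) :
    (∑ᶠ l ∈ {l : List ℕ | IsPartition l ∧ Osum l = n}, ((-1 : ℤ)) ^ Esum l)
    = (Nat.card {l : List ℕ // IsPartition l ∧ l.sum = n ∧ ∀ x ∈ l, Even x} : ℤ) := by
  have hO : {l | IsPartition l ∧ Osum l = n}
      = ↑{l ∈ boundedPartitions n (2 * n) | Osum l = n} := by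
    ext l
    simp only [Set.mem_ofPred_eq, coe_filter, mem_boundedPartitions]
    constructor
    · rintro ⟨hl, rfl⟩
      exact ⟨⟨hl, fun x hx => le_Osum_of_mem hl hx, length_le_two_mul_Osum hl.2⟩, rfl⟩
    · exact fun h => ⟨h.1.1, h.2⟩
  have hE : Nat.card {l : List ℕ // IsPartition l ∧ l.sum = n ∧ ∀ x ∈ l, Even x}
      = #{l ∈ boundedPartitions n n | (∀ p ∈ l, Even p) ∧ l.sum = n} := by
    rw [← Nat.card_eq_finsetCard]
    refine Nat.card_congr (Equiv.subtypeEquivRight fun l => ?_)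
    simp only [mem_filter, mem_boundedPartitions]
    constructor
    · rintro ⟨hl, rfl, heven⟩
      exact ⟨⟨hl, fun x hx => List.le_sum_of_mem hx,
        List.length_le_sum_of_one_le l hl.2⟩, heven, rfl⟩
    · exact fun h => ⟨h.1.1, h.2.2, h.2.1⟩
  rw [hO, finsum_mem_coe_finset, hE, ← coeff_oddEvenSum, ← coeff_evenPartsSum,
    oddEvenSum_two_mul_neg_one]
end

section
/- For every nonnegative integer n, the number of partitions π into distinct parts with O(π) = n equals the weighted count ∑_μ ω(μ), taken over all partitions μ of n whose consecutive parts differ by at least 2 (Rogers–Ramanujan partitions), where for μ = (μ1, …, μk) with k ≥ 1 the weight is ω(μ) := μ_k · ∏_{i=1}^{k−1} (μ_i − μ_{i+1} − 1), and ω(∅) := 1. -/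
/-- A Rogers–Ramanujan partition: consecutive parts differ by at least 2
(and all parts are positive). -/
def IsRRPartition (l : List ℕ) : Prop :=
  l.Chain' (fun a b => b + 2 ≤ a) ∧ ∀ x ∈ l, 0 < x

/-- The multiplicative weight `ω(μ) = μ_k ∏_{i=1}^{k−1} (μ_i − μ_{i+1} − 1)`,
with `ω(∅) = 1`. -/
def rrWeight : List ℕ → ℕ
  | [] => 1
  | [a] => a
  | a :: b :: l => (a - b - 1) * rrWeight (b :: l)

def oddParts : List ℕ → List ℕ
  | [] => []
  | [a] => [a]
  | a :: _ :: l => a :: oddParts l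

lemma sum_oddParts (l : List ℕ) : (oddParts l).sum = Osum l := by
  induction l using oddParts.induct with
  | case1 | case2 => rfl
  | case3 a b l ih => simpa [oddParts, Osum, sumAlt] using ih

lemma headD_oddParts (l : List ℕ) : (oddParts l).headD 0 = l.headD 0 := by
  cases l using oddParts.induct <;> rfl

lemma oddParts_eq_nil_iff {l : List ℕ} : oddParts l = [] ↔ l = [] := by
  cases l using oddParts.induct <;> simp [oddParts]

lemma oddParts_eq_cons_iff {l μ : List ℕ} {a : ℕ} :
    oddParts l = a :: μ ↔ (l = [a] ∧ μ = []) ∨ ∃ c r, l = a :: c :: r ∧ oddParts r = μ := by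
  cases l using oddParts.induct <;> simp [oddParts, eq_comm]

lemma isDistinctPartition_nil : IsDistinctPartition [] := by
  simp [IsDistinctPartition]

-- A missing next part reads as `0`, so this also forces the last part to be positive.
lemma isDistinctPartition_cons_iff {a : ℕ} {l : List ℕ} :
    IsDistinctPartition (a :: l) ↔ l.headD 0 < a ∧ IsDistinctPartition l := by
  simp only [IsDistinctPartition, ← List.isChain_iff_pairwise]
  cases l with
  | nil => simp
  | cons b t =>
    simp only [List.isChain_cons_cons, List.mem_cons, forall_eq_or_imp, List.headD_cons]
    constructor
    · rintro ⟨⟨hba, ht⟩, -, hb, hpos⟩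
      exact ⟨hba, ⟨ht, hb, hpos⟩⟩
    · rintro ⟨hba, ht, hb, hpos⟩
      exact ⟨⟨hba, ht⟩, hb.trans hba, hb, hpos⟩

lemma isDistinctPartition_cons_cons_iff {a c : ℕ} {r : List ℕ} :
    IsDistinctPartition (a :: c :: r) ↔ c < a ∧ r.headD 0 < c ∧ IsDistinctPartition r := by
  simp only [isDistinctPartition_cons_iff, List.headD_cons]

lemma IsRRPartition.cons {a : ℕ} {l : List ℕ} (h : IsRRPartition l) (ha : l.headD 0 + 2 ≤ a) :
    IsRRPartition (a :: l) := by
  refine ⟨List.isChain_cons.2 ⟨fun b hb => ?_, h.1⟩, ?_⟩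
  · cases l <;> simp_all
  · simp only [List.mem_cons, forall_eq_or_imp]
    exact ⟨by omega, h.2⟩

lemma IsDistinctPartition.isRRPartition_oddParts {l : List ℕ} (h : IsDistinctPartition l) :
    IsRRPartition (oddParts l) := by
  induction l using oddParts.induct with
  | case1 => exact ⟨List.isChain_nil, by simp [oddParts]⟩
  | case2 a => exact ⟨List.isChain_singleton a, by simpa [oddParts] using h.2⟩
  | case3 a c r ih =>
    obtain ⟨hca, hrc, hr⟩ := isDistinctPartition_cons_cons_iff.1 h
    exact (ih hr).cons (by rw [headD_oddParts]; omega)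

lemma finite_setOf_isRRPartition_sum_eq (n : ℕ) :
    {μ : List ℕ | IsRRPartition μ ∧ μ.sum = n}.Finite :=
  (Set.finite_range (Composition.blocks (n := n))).subset
    fun μ ⟨hμ, hsum⟩ => ⟨⟨μ, hμ.2 _, hsum⟩, rfl⟩

def oddPartsFiber : List ℕ → Finset (List ℕ)
  | [] => {[]}
  | a :: μ => (if μ = [] then {[a]} else ∅) ∪
      (Finset.Ioo (μ.headD 0) a ×ˢ oddPartsFiber μ).image fun p => a :: p.1 :: p.2

lemma mem_oddPartsFiber {μ : List ℕ} (hμ : ∀ x ∈ μ, 0 < x) {l : List ℕ} :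
    l ∈ oddPartsFiber μ ↔ IsDistinctPartition l ∧ oddParts l = μ := by
  induction μ generalizing l with
  | nil =>
    simp only [oddPartsFiber, Finset.mem_singleton, oddParts_eq_nil_iff]
    exact ⟨fun h => ⟨h ▸ isDistinctPartition_nil, h⟩, And.right⟩
  | cons a μ ih =>
    have ha : 0 < a := hμ a List.mem_cons_self
    have ih := fun r => ih (fun x hx => hμ x (List.mem_cons_of_mem a hx)) (l := r)
    simp only [oddPartsFiber, Finset.mem_union, Finset.mem_image, Finset.mem_product,
      Finset.mem_Ioo, Prod.exists, ih, oddParts_eq_cons_iff]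
    constructor
    · rintro (h | ⟨c, r, ⟨⟨hμc, hca⟩, hr, ho⟩, rfl⟩)
      · split_ifs at h with hnil
        · obtain rfl := Finset.mem_singleton.1 h
          exact ⟨isDistinctPartition_cons_iff.2 ⟨ha, isDistinctPartition_nil⟩, .inl ⟨rfl, hnil⟩⟩
        · simp at h
      · refine ⟨isDistinctPartition_cons_cons_iff.2 ⟨hca, ?_, hr⟩, .inr ⟨c, r, rfl, ho⟩⟩
        rwa [← headD_oddParts, ho]
    · rintro ⟨hl, ⟨rfl, rfl⟩ | ⟨c, r, rfl, ho⟩⟩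
      · simp
      · obtain ⟨hca, hrc, hr⟩ := isDistinctPartition_cons_cons_iff.1 hl
        exact .inr ⟨c, r, ⟨⟨by rwa [← ho, headD_oddParts], hca⟩, hr, ho⟩, rfl⟩

lemma card_oddPartsFiber {μ : List ℕ} (hμ : ∀ x ∈ μ, 0 < x) :
    (oddPartsFiber μ).card = rrWeight μ := by
  induction μ with
  | nil => rfl
  | cons a μ ih =>
    have ha : 0 < a := hμ a List.mem_cons_self
    have hinj : Function.Injective fun p : ℕ × List ℕ => a :: p.1 :: p.2 := by
      rintro ⟨c, r⟩ ⟨c', r'⟩ h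
      simpa using h
    have hdisj : Disjoint (if μ = [] then {[a]} else ∅)
        ((Finset.Ioo (μ.headD 0) a ×ˢ oddPartsFiber μ).image fun p => a :: p.1 :: p.2) := by
      split_ifs <;> simp
    rw [oddPartsFiber, Finset.card_union_of_disjoint hdisj, Finset.card_image_of_injective _ hinj,
      Finset.card_product, Nat.card_Ioo, ih fun x hx => hμ x (List.mem_cons_of_mem a hx)]
    cases μ with
    | nil => simp [rrWeight]; omega
    | cons b m => simp [rrWeight]

lemma setOf_isDistinctPartition_osum_eq_biUnion (n : ℕ) :
    {l : List ℕ | IsDistinctPartition l ∧ Osum l = n} =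
      ⋃ μ ∈ {μ : List ℕ | IsRRPartition μ ∧ μ.sum = n}, ↑(oddPartsFiber μ) := by
  ext l
  simp only [Set.mem_ofPred_eq, Set.mem_iUnion, Finset.mem_coe, exists_prop]
  constructor
  · rintro ⟨hl, rfl⟩
    have hRR := hl.isRRPartition_oddParts
    exact ⟨oddParts l, ⟨hRR, sum_oddParts l⟩, (mem_oddPartsFiber hRR.2).2 ⟨hl, rfl⟩⟩
  · rintro ⟨μ, ⟨hμ, rfl⟩, hl⟩
    obtain ⟨hd, rfl⟩ := (mem_oddPartsFiber hμ.2).1 hl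
    exact ⟨hd, (sum_oddParts l).symm⟩

/-- The number of partitions into distinct parts with `O(π) = n` equals the weighted count
`∑ ω(μ)` over Rogers–Ramanujan partitions `μ` of `n`. -/
theorem schmidt_eq_weighted_rogers_ramanujan (n : ℕ) :
    Nat.card {l : List ℕ // IsDistinctPartition l ∧ Osum l = n}
    = ∑ᶠ l ∈ {l : List ℕ | IsRRPartition l ∧ l.sum = n}, rrWeight l := by
  have hdisj : {μ : List ℕ | IsRRPartition μ ∧ μ.sum = n}.PairwiseDisjoint
      fun μ => (oddPartsFiber μ : Set (List ℕ)) := by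
    intro μ hμ ν hν hne
    refine Set.disjoint_left.2 fun l hlμ hlν => hne ?_
    rw [← ((mem_oddPartsFiber hμ.1.2).1 hlμ).2, ((mem_oddPartsFiber hν.1.2).1 hlν).2]
  change Nat.card ↥{l : List ℕ | _} = _
  rw [Nat.card_coe_set_eq, setOf_isDistinctPartition_osum_eq_biUnion,
    (finite_setOf_isRRPartition_sum_eq n).ncard_biUnion (fun μ _ => Finset.finite_toSet _) hdisj]
  exact finsum_mem_congr rfl fun μ hμ => by rw [Set.ncard_coe_finset, card_oddPartsFiber hμ.1.2]
end
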